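/- arXiv:2002.01739 — 3 statements merged into one kernel-verified Lean document; each statement's English description precedes it below -/
import Mathlib

section
/- Let p be a prime and n ≥ 2 an integer. For every integer d with 0 ≤ d ≤ pn−2, the congruence (−1)^d · C(pn−2, d) ≡ Σ (−1)^a · C(n−2, a) (mod p) holds, where the sum ranges over all triples (a,b,c) with 0 ≤ a ≤ n−2, 0 ≤ b ≤ p−1, 0 ≤ c ≤ p−1 and pa + b + c = d. -/
/-!
In characteristic `p`, Frobenius gives `(1 - X) ^ p = 1 - X ^ p`, hence
`(1 - X) ^ (p - 1) = 1 + X + ⋯ + X ^ (p - 1)` and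
`(1 - X) ^ (p n - 2) = (1 - X ^ p) ^ (n - 2) * (1 + X + ⋯ + X ^ (p - 1)) ^ 2`.
The congruence is the comparison of the coefficients of `X ^ d` on both sides over `ZMod p`.
-/

open Polynomial Finset

theorem one_sub_pow_eq_sum {S : Type*} [CommRing S] (y : S) (k : ℕ) :
    (1 - y) ^ k = ∑ a ∈ range (k + 1), (-1) ^ a * k.choose a * y ^ a := by
  rw [sub_eq_neg_add, add_pow]
  refine sum_congr rfl fun a _ => ?_
  rw [neg_pow]
  ring

namespace Polynomial

variable {R : Type*} [CommRing R]

theorem coeff_one_sub_X_pow (m d : ℕ) :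
    ((1 - X : R[X]) ^ m).coeff d = (-1) ^ d * m.choose d := by
  have h : (1 - X : R[X]) ^ m = C ((-1) ^ m) * (X + C (-1)) ^ m := by
    rw [C_pow, ← mul_pow]
    congr 1
    simp only [map_neg, map_one]
    ring
  rw [h, coeff_C_mul, coeff_X_add_C_pow, ← mul_assoc, ← pow_add]
  rcases le_or_gt d m with hdm | hdm
  · rw [show m + (m - d) = d + 2 * (m - d) by omega, pow_add, pow_mul]
    simp
  · simp [Nat.choose_eq_zero_of_lt hdm]

theorem coeff_sum_C_mul_X_pow {ι : Type*} (s : Finset ι) (f : ι → R) (e : ι → ℕ) (d : ℕ) :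
    (∑ i ∈ s, C (f i) * X ^ e i).coeff d = ∑ i ∈ s with e i = d, f i := by
  simp only [finsetSum_coeff, coeff_C_mul_X_pow, sum_filter, eq_comm]

variable (p : ℕ) [Fact p.Prime] [CharP R p]

theorem one_sub_X_pow_pred_eq_geom_sum :
    (1 - X : R[X]) ^ (p - 1) = ∑ i ∈ range p, X ^ i := by
  apply (monic_X_sub_C (1 : R)).isRegular.left
  simp only [map_one, ← neg_sub (1 : R[X]) X, neg_mul, neg_inj]
  rw [mul_neg_geom_sum, ← pow_succ', Nat.sub_add_cancel (Fact.out : p.Prime).one_le,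
    sub_pow_char, one_pow]

theorem one_sub_X_pow_eq_sum_triples (k : ℕ) :
    (1 - X : R[X]) ^ (p * k + (p - 1) + (p - 1)) =
      ∑ t ∈ range (k + 1) ×ˢ range p ×ˢ range p,
        C ((-1) ^ t.1 * (k.choose t.1 : R)) * X ^ (p * t.1 + t.2.1 + t.2.2) := by
  rw [pow_add, pow_add, pow_mul, sub_pow_char, one_pow, one_sub_X_pow_pred_eq_geom_sum,
    one_sub_pow_eq_sum, mul_assoc, sum_mul_sum, sum_mul]
  simp only [mul_sum, sum_product]
  refine sum_congr rfl fun a _ => sum_congr rfl fun b _ => sum_congr rfl fun c _ => ?_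
  simp only [map_mul, map_pow, map_neg, map_one, map_natCast, pow_add, pow_mul]
  ring

end Polynomial

theorem elliptic_surface_congruence_general (p n d : ℕ) (hp : p.Prime) (hn : 2 ≤ n) :
    Int.ModEq (p : ℤ)
      ((-1 : ℤ) ^ d * ((p * n - 2).choose d : ℤ))
      (∑ t ∈ ((Finset.range (n - 1)) ×ˢ (Finset.range p) ×ˢ (Finset.range p)).filter
          (fun t => p * t.1 + t.2.1 + t.2.2 = d),
        (-1 : ℤ) ^ t.1 * ((n - 2).choose t.1 : ℤ)) := by
  have : Fact p.Prime := ⟨hp⟩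
  obtain ⟨k, rfl⟩ : ∃ k, n = k + 2 := ⟨n - 2, by omega⟩
  have hdeg : p * (k + 2) - 2 = p * k + (p - 1) + (p - 1) := by
    have := hp.two_le
    rw [mul_add]
    omega
  rw [← ZMod.intCast_eq_intCast_iff, Nat.add_sub_cancel, show k + 2 - 1 = k + 1 by omega]
  push_cast
  rw [← coeff_one_sub_X_pow, hdeg, one_sub_X_pow_eq_sum_triples, coeff_sum_C_mul_X_pow]

/-- **Elliptic surface congruence.** For a prime `p`, `n ≥ 2` and `0 ≤ d ≤ pn−2`,
`(−1)^d C(pn−2, d) ≡ Σ (−1)^a C(n−2, a) (mod p)`, the sum ranging over triples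
`(a,b,c)` with `0 ≤ a ≤ n−2`, `0 ≤ b,c ≤ p−1` and `pa+b+c = d`. -/
theorem elliptic_surface_congruence (p n d : ℕ) (hp : p.Prime) (hn : 2 ≤ n)
    (hd : d ≤ p * n - 2) :
    Int.ModEq (p : ℤ)
      ((-1 : ℤ) ^ d * ((p * n - 2).choose d : ℤ))
      (∑ t ∈ ((Finset.range (n - 1)) ×ˢ (Finset.range p) ×ˢ (Finset.range p)).filter
          (fun t => p * t.1 + t.2.1 + t.2.2 = d),
        (-1 : ℤ) ^ t.1 * ((n - 2).choose t.1 : ℤ)) :=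
  elliptic_surface_congruence_general p n d hp hn
end

section
/- Let G be a finite group and V a finite-dimensional complex representation of a central extension 𝔾 of G by T = U(1), on which the central T acts by scalar multiplication. For a subgroup H ≤ G, the H-fixed point set of the induced G-action on the complex projective space ℂP(V) is the disjoint union over all splittings j: H → 𝔾 (subgroups H(j) ≤ 𝔾 mapping isomorphically to H) of the projective spaces ℂP(V^{H(j)}) of the H(j)-fixed subspaces. In particular, if no splitting over H exists, ℂP(V)^H is empty. -/
/-!
If `π g ∈ H`, then `v` is an eigenvector of `ρ g`, say `ρ g v = c • v`. As `G` is finite,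
`g ^ |G|` lies in the circle, so `c ^ |G|` has norm one and hence so does `c`; multiplying `g` by
the circle element `c⁻¹` gives a lift of `π g` fixing `v`. Two lifts fixing `v` differ by a
circle element `z` with `z • v = v`, i.e. `z = 1`. So `π` maps the lifts of elements of `H`
fixing `v` isomorphically onto `H`, and the inverse is the unique splitting fixing `v`.
Conversely, if a splitting `s` fixes `v`, every `g` over `h ∈ H` is `z * s h` with `z` in the
circle, so it acts on `v` by the scalar `z`.
-/

variable {𝔾 G V : Type*} [Group 𝔾] [Group G] [AddCommGroup V]

abbrev Splitting (π : 𝔾 →* G) (H : Subgroup G) : Type _ :=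
  {s : H →* 𝔾 // ∀ h : H, π (s h) = (h : G)}

def stabilizerOver {k : Type*} [CommSemiring k] [Module k V]
    (π : 𝔾 →* G) (H : Subgroup G) (ρ : Representation k 𝔾 V) (v : V) : Subgroup 𝔾 :=
  H.comap π ⊓ (MulAction.stabilizer (V →ₗ[k] V)ˣ v).comap ρ.asGroupHom

theorem mem_stabilizerOver {k : Type*} [CommSemiring k] [Module k V] {π : 𝔾 →* G}
    {H : Subgroup G} {ρ : Representation k 𝔾 V} {v : V} {g : 𝔾} :
    g ∈ stabilizerOver π H ρ v ↔ π g ∈ H ∧ ρ g v = v := by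
  simp only [stabilizerOver, Subgroup.mem_inf, Subgroup.mem_comap, MulAction.mem_stabilizer_iff,
    Units.smul_def, Representation.asGroupHom_apply, Module.End.smul_def]

section CircleActsByScalars

variable [Module ℂ V] {ι : Circle →* 𝔾} {ρ : Representation ℂ 𝔾 V} {v : V}

theorem eq_one_of_mem_range_of_apply_eq_self
    (hscalar : ∀ (z : Circle) (w : V), ρ (ι z) w = (z : ℂ) • w) (hv : v ≠ 0)
    {g : 𝔾} (hg : g ∈ ι.range) (hfix : ρ g v = v) : g = 1 := by
  obtain ⟨z, rfl⟩ := hg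
  have hz : (z : ℂ) = 1 :=
    smul_left_injective ℂ hv <| show (z : ℂ) • v = (1 : ℂ) • v by rw [← hscalar, hfix, one_smul]
  rw [Circle.coe_injective (hz.trans Circle.coe_one.symm), map_one]

theorem norm_eq_one_of_apply_eq_smul
    (hscalar : ∀ (z : Circle) (w : V), ρ (ι z) w = (z : ℂ) • w) (hv : v ≠ 0)
    {g : 𝔾} {c : ℂ} (hc : ρ g v = c • v) {n : ℕ} (hn : n ≠ 0) (hgn : g ^ n ∈ ι.range) :
    ‖c‖ = 1 := by
  obtain ⟨z, hz⟩ := hgn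
  have hpow : ρ (g ^ n) v = c ^ n • v := by
    rw [map_pow]
    exact (Module.End.hasEigenvector_iff.2 ⟨Module.End.mem_eigenspace_iff.2 hc, hv⟩).pow_apply n
  have hcz : c ^ n = z :=
    smul_left_injective ℂ hv <| show c ^ n • v = (z : ℂ) • v by rw [← hpow, ← hz, hscalar]
  rw [← pow_eq_one_iff_of_nonneg (norm_nonneg c) hn, ← norm_pow, hcz, Circle.norm_coe]

theorem exists_circle_mul_apply_eq_self
    (hscalar : ∀ (z : Circle) (w : V), ρ (ι z) w = (z : ℂ) • w) (hv : v ≠ 0)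
    {g : 𝔾} {c : ℂ} (hc : ρ g v = c • v) {n : ℕ} (hn : n ≠ 0) (hgn : g ^ n ∈ ι.range) :
    ∃ z : Circle, ρ (ι z * g) v = v := by
  let u : Circle :=
    ⟨c, mem_sphere_zero_iff_norm.2 (norm_eq_one_of_apply_eq_smul hscalar hv hc hn hgn)⟩
  refine ⟨u⁻¹, ?_⟩
  rw [map_mul, Module.End.mul_apply, hc, map_smul, hscalar, smul_smul, Circle.coe_inv]
  exact (congrArg (· • v) (mul_inv_cancel₀ u.coe_ne_zero)).trans (one_smul ℂ v)

theorem exists_apply_eq_smul_of_mul_inv_mem_range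
    (hscalar : ∀ (z : Circle) (w : V), ρ (ι z) w = (z : ℂ) • w)
    {g g' : 𝔾} (hfix : ρ g' v = v) (hg : g * g'⁻¹ ∈ ι.range) : ∃ c : ℂ, ρ g v = c • v := by
  obtain ⟨z, hz⟩ := hg
  refine ⟨(z : ℂ), ?_⟩
  calc ρ g v = ρ (ι z) (ρ g' v) := by
        rw [← Module.End.mul_apply, ← map_mul, hz, inv_mul_cancel_right]
    _ = (z : ℂ) • v := by rw [hfix, hscalar]

variable {π : 𝔾 →* G} {H : Subgroup G}

theorem injective_comp_subtype_stabilizerOver (hker : π.ker ≤ ι.range)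
    (hscalar : ∀ (z : Circle) (w : V), ρ (ι z) w = (z : ℂ) • w) (hv : v ≠ 0) :
    Function.Injective (π.comp (stabilizerOver π H ρ v).subtype) := by
  refine (injective_iff_map_eq_one _).2 fun a ha => Subtype.ext ?_
  exact eq_one_of_mem_range_of_apply_eq_self hscalar hv (hker ha) (mem_stabilizerOver.1 a.2).2

theorem Splitting.ext_of_apply_eq_self (hker : π.ker ≤ ι.range)
    (hscalar : ∀ (z : Circle) (w : V), ρ (ι z) w = (z : ℂ) • w) (hv : v ≠ 0)
    {s t : Splitting π H} (hs : ∀ h : H, ρ (s.1 h) v = v) (ht : ∀ h : H, ρ (t.1 h) v = v) :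
    s = t := by
  refine Subtype.ext <| MonoidHom.ext fun h => ?_
  have hinj := injective_comp_subtype_stabilizerOver (H := H) hker hscalar hv
  have hs' : s.1 h ∈ stabilizerOver π H ρ v := mem_stabilizerOver.2 ⟨(s.2 h).symm ▸ h.2, hs h⟩
  have ht' : t.1 h ∈ stabilizerOver π H ρ v := mem_stabilizerOver.2 ⟨(t.2 h).symm ▸ h.2, ht h⟩
  exact congrArg Subtype.val (@hinj ⟨_, hs'⟩ ⟨_, ht'⟩ ((s.2 h).trans (t.2 h).symm))

theorem exists_splitting_apply_eq_self [Finite G] (hker : π.ker = ι.range)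
    (hπ : Function.Surjective π)
    (hscalar : ∀ (z : Circle) (w : V), ρ (ι z) w = (z : ℂ) • w) (hv : v ≠ 0)
    (hall : ∀ g : 𝔾, π g ∈ H → ∃ c : ℂ, ρ g v = c • v) :
    ∃ s : Splitting π H, ∀ h : H, ρ (s.1 h) v = v := by
  let S := stabilizerOver π H ρ v
  let φ : S →* H := (π.comp S.subtype).codRestrict H fun g => (mem_stabilizerOver.1 g.2).1
  have hφinj : Function.Injective φ := fun a b hab =>
    injective_comp_subtype_stabilizerOver hker.le hscalar hv (congrArg Subtype.val hab)
  have hφsurj : Function.Surjective φ := by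
    intro h
    obtain ⟨g, hg⟩ := hπ h
    obtain ⟨c, hc⟩ := hall g (hg ▸ h.2)
    have hgn : g ^ Nat.card G ∈ ι.range := by
      rw [← hker, MonoidHom.mem_ker, map_pow, pow_card_eq_one']
    obtain ⟨z, hz⟩ := exists_circle_mul_apply_eq_self hscalar hv hc Nat.card_pos.ne' hgn
    have hπz : π (ι z * g) = h := by
      rw [map_mul, (MonoidHom.mem_ker).1 (hker ▸ ⟨z, rfl⟩), one_mul, hg]
    exact ⟨⟨ι z * g, mem_stabilizerOver.2 ⟨hπz ▸ h.2, hz⟩⟩, Subtype.ext hπz⟩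
  let e : S ≃* H := MulEquiv.ofBijective φ ⟨hφinj, hφsurj⟩
  refine ⟨⟨S.subtype.comp e.symm.toMonoidHom, fun h => ?_⟩, fun h => ?_⟩
  · exact congrArg Subtype.val (e.apply_symm_apply h)
  · exact (mem_stabilizerOver.1 (e.symm h).2).2

theorem exists_apply_eq_smul_of_splitting (hker : π.ker ≤ ι.range)
    (hscalar : ∀ (z : Circle) (w : V), ρ (ι z) w = (z : ℂ) • w)
    (s : Splitting π H) (hs : ∀ h : H, ρ (s.1 h) v = v) {g : 𝔾} (hg : π g ∈ H) :
    ∃ c : ℂ, ρ g v = c • v :=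
  exists_apply_eq_smul_of_mul_inv_mem_range hscalar (hs ⟨π g, hg⟩)
    (hker (by rw [MonoidHom.mem_ker, map_mul, map_inv, s.2, mul_inv_cancel]))

end CircleActsByScalars

theorem projectivization_fixed_points_of_central_circle_extension_general
    {𝔾 : Type} [Group 𝔾] {G : Type} [Group G] [Finite G]
    (ι : Circle →* 𝔾) (π : 𝔾 →* G)
    (hπ : Function.Surjective π)
    (hker : π.ker = ι.range)
    {V : Type} [AddCommGroup V] [Module ℂ V]
    (ρ : Representation ℂ 𝔾 V)
    (hscalar : ∀ (z : Circle) (v : V), ρ (ι z) v = (z : ℂ) • v)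
    (H : Subgroup G) (v : V) (hv : v ≠ 0) :
    ((∀ g : 𝔾, π g ∈ H → ∃ c : ℂ, ρ g v = c • v) ↔
      ∃! s : {s : H →* 𝔾 // ∀ h : H, π (s h) = (h : G)},
        ∀ h : H, ρ (s.1 h) v = v) ∧
    (IsEmpty {s : H →* 𝔾 // ∀ h : H, π (s h) = (h : G)} →
      ¬ (∀ g : 𝔾, π g ∈ H → ∃ c : ℂ, ρ g v = c • v)) := by
  have key : (∀ g : 𝔾, π g ∈ H → ∃ c : ℂ, ρ g v = c • v) ↔
      ∃! s : Splitting π H, ∀ h : H, ρ (s.1 h) v = v := by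
    refine ⟨fun hall => ?_, fun ⟨s, hs, _⟩ _ hg =>
      exists_apply_eq_smul_of_splitting hker.le hscalar s hs hg⟩
    obtain ⟨s, hs⟩ := exists_splitting_apply_eq_self hker hπ hscalar hv hall
    exact ⟨s, hs, fun t ht => Splitting.ext_of_apply_eq_self hker.le hscalar hv ht hs⟩
  refine ⟨key, fun hempty hall => ?_⟩
  obtain ⟨s, -⟩ := key.1 hall
  exact hempty.elim s

/-- **Fixed points of `ℂP(V)` under a subgroup.** Let `1 → T → 𝔾 → G → 1` be a central
extension of a finite group `G` by the circle `T`, and let `V` be a complex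
`𝔾`-representation on which the central circle acts by scalar multiplication. For a
subgroup `H ≤ G`, a nonzero vector `v` spans an `H`-fixed line in `ℂP(V)` (i.e. every
element of the preimage of `H` maps `v` into its span) if and only if there is a
*unique* splitting `j` of the extension over `H` (a section `s : H →* 𝔾` of `π`,
i.e. a subgroup `H(j) ≤ 𝔾` mapping isomorphically to `H`) such that `v` is fixed by
`H(j)`; so `ℂP(V)^H = ⨆_j ℂP(V^{H(j)})`, a disjoint union over splittings. In
particular, if no splitting over `H` exists, `ℂP(V)^H` is empty. -/
theorem projectivization_fixed_points_of_central_circle_extension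
    {𝔾 : Type} [Group 𝔾] {G : Type} [Group G] [Finite G]
    (ι : Circle →* 𝔾) (π : 𝔾 →* G)
    (hι : Function.Injective ι)
    (hcentral : ∀ z : Circle, ι z ∈ Subgroup.center 𝔾)
    (hπ : Function.Surjective π)
    (hker : π.ker = ι.range)
    {V : Type} [AddCommGroup V] [Module ℂ V]
    (ρ : Representation ℂ 𝔾 V)
    (hscalar : ∀ (z : Circle) (v : V), ρ (ι z) v = (z : ℂ) • v)
    (H : Subgroup G) (v : V) (hv : v ≠ 0) :
    ((∀ g : 𝔾, π g ∈ H → ∃ c : ℂ, ρ g v = c • v) ↔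
      ∃! s : {s : H →* 𝔾 // ∀ h : H, π (s h) = (h : G)},
        ∀ h : H, ρ (s.1 h) v = v) ∧
    (IsEmpty {s : H →* 𝔾 // ∀ h : H, π (s h) = (h : G)} →
      ¬ (∀ g : 𝔾, π g ∈ H → ∃ c : ℂ, ρ g v = c • v)) :=
  projectivization_fixed_points_of_central_circle_extension_general ι π hπ hker ρ hscalar H v hv
end

section
/- Let p be a prime, n ≥ 2, and 0 ≤ d ≤ pn−2 with d = pq + r, 0 ≤ r ≤ p−1. Then Σ_{(a,b,c): pa+b+c=d, 0≤a≤n−2, 0≤b,c≤p−1} (−1)^a C(n−2,a) = (r+1)·(−1)^q C(n−2,q) + (p−1−r)·(−1)^{q−1} C(n−2,q−1), with the conventions C(n−2,k) = 0 for k < 0 or k > n−2. Combined with Lucas' theorem applied to C(pn−2,d) with pn−2 = p(n−2) + (2p−2) rewritten in base p as digits (n−1, p−2), this sum is congruent mod p to (−1)^d C(pn−2,d). -/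
/-!
Since `b + c ≤ 2p - 2`, a triple with `p a + b + c = p q + r` has either `a = q` and `b + c = r`
(`r + 1` pairs) or `a = q - 1` and `b + c = p + r` (`p - 1 - r` pairs); this is the closed form.
Modulo `p` we have `p - 1 - r ≡ -(r + 1)`, so by Pascal's rule the closed form reduces to
`(-1)^q (r + 1) C(n - 1, q)`. On the other side, Lucas' theorem for the base-`p` digits
`pn - 2 = p (n - 1) + (p - 2)` gives `C(pn - 2, d) ≡ C(p - 2, r) C(n - 1, q)`, and
`C(p - 2, r) ≡ (-1)^r (r + 1)` follows from `C(p - 1, k) ≡ (-1)^k` by Pascal's rule again.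
-/

open Finset

-- `m` plays the role of `n - 2`.
def ellipticClosedForm (p m q r : ℕ) : ℤ :=
  ((r : ℤ) + 1) * (-1) ^ q * (m.choose q : ℤ) +
    (if 1 ≤ q then ((p : ℤ) - 1 - (r : ℤ)) * (-1) ^ (q - 1) * (m.choose (q - 1) : ℤ) else 0)

section DigitPairs

variable (p : ℕ)

lemma card_filter_range_product_range_add_eq_of_lt {s : ℕ} (hs : s < p) :
    #{x ∈ range p ×ˢ range p | x.1 + x.2 = s} = s + 1 := by
  rw [← Nat.card_antidiagonal s]
  congr 1
  ext ⟨b, c⟩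
  simp only [mem_filter, mem_product, mem_range, HasAntidiagonal.mem_antidiagonal]
  omega

lemma card_filter_range_product_range_add_eq_add {r : ℕ} (hr : r < p) :
    #{x ∈ range p ×ˢ range p | x.1 + x.2 = p + r} = p - 1 - r := by
  have : {x ∈ range p ×ˢ range p | x.1 + x.2 = p + r} =
      (Ico (r + 1) p).image fun b => (b, p + r - b) := by
    ext ⟨b, c⟩
    simp only [mem_filter, mem_product, mem_range, mem_image, mem_Ico, Prod.mk.injEq]
    constructor
    · rintro ⟨⟨hb, hc⟩, h⟩
      exact ⟨b, by omega, rfl, by omega⟩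
    · rintro ⟨b, hb, rfl, rfl⟩
      omega
  rw [this, card_image_of_injective _ fun _ _ h => congrArg Prod.fst h, Nat.card_Ico]
  omega

lemma card_filter_digit_pairs {a q r : ℕ} (hr : r < p) :
    #{x ∈ range p ×ˢ range p | p * a + x.1 + x.2 = p * q + r} =
      (if a = q then r + 1 else 0) + (if a + 1 = q then p - 1 - r else 0) := by
  by_cases haq : a = q
  · subst haq
    simp only [add_assoc, Nat.add_left_cancel_iff, if_pos, Nat.succ_ne_self, if_false, add_zero]
    exact card_filter_range_product_range_add_eq_of_lt p hr
  by_cases haq' : a + 1 = q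
  · subst haq'
    simp only [haq, if_false, if_true, zero_add]
    rw [← card_filter_range_product_range_add_eq_add p hr]
    congr 1
    refine filter_congr fun x _ => ?_
    rw [mul_add, mul_one]
    omega
  simp only [haq, haq', if_false, add_zero, card_eq_zero, filter_eq_empty_iff]
  rintro ⟨b, c⟩ hbc
  simp only [mem_product, mem_range] at hbc
  rcases Nat.lt_or_gt_of_ne haq with hlt | hgt
  · have := Nat.mul_le_mul_left p (show a + 2 ≤ q by omega)
    rw [mul_add] at this
    omega
  · have := Nat.mul_le_mul_left p (show q + 1 ≤ a by omega)
    rw [mul_add] at this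
    omega

end DigitPairs

theorem sum_filter_digit_triples_eq_ellipticClosedForm (p m q r : ℕ) (hr : r < p) :
    ∑ t ∈ (range (m + 1) ×ˢ range p ×ˢ range p) with p * t.1 + t.2.1 + t.2.2 = p * q + r,
      (-1 : ℤ) ^ t.1 * (m.choose t.1 : ℤ) = ellipticClosedForm p m q r := by
  set g : ℕ → ℤ := fun a => (-1) ^ a * (m.choose a : ℤ)
  have hg : ∀ a, a ∉ range (m + 1) → g a = 0 := fun a ha => by
    simp [g, Nat.choose_eq_zero_of_lt (by simpa [Nat.lt_succ_iff] using ha : m < a)]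
  calc ∑ t ∈ (range (m + 1) ×ˢ range p ×ˢ range p) with p * t.1 + t.2.1 + t.2.2 = p * q + r,
        g t.1
      = ∑ a ∈ range (m + 1), #{x ∈ range p ×ˢ range p | p * a + x.1 + x.2 = p * q + r} • g a := by
        rw [sum_filter, sum_product]
        refine sum_congr rfl fun a _ => ?_
        rw [← sum_filter]
        exact sum_const (g a)
    _ = ∑ a ∈ range (m + 1), ((if a = q then (r + 1) • g a else 0) +
          if a + 1 = q then (p - 1 - r) • g a else 0) := by
        refine sum_congr rfl fun a _ => ?_
        rw [card_filter_digit_pairs p hr, add_smul]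
        split_ifs <;> simp_all
    _ = (r + 1) • g q + if 1 ≤ q then (p - 1 - r) • g (q - 1) else 0 := by
        rw [sum_add_distrib, sum_eq_single q (fun b _ hb => if_neg hb)
          (fun hq => by rw [if_pos rfl, hg q hq, smul_zero]), if_pos rfl]
        congr 1
        split_ifs with hq
        · rw [sum_eq_single (q - 1) (fun b _ hb => if_neg (by omega))
            (fun hq' => by rw [if_pos (by omega), hg _ hq', smul_zero]), if_pos (by omega)]
        · exact sum_eq_zero fun a _ => if_neg (by omega)
    _ = ellipticClosedForm p m q r := by
        simp only [ellipticClosedForm, g, nsmul_eq_mul]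
        split_ifs
        · push_cast [Nat.cast_sub (by omega : r ≤ p - 1), Nat.cast_sub (by omega : 1 ≤ p)]
          ring
        · push_cast
          ring

section Lucas

variable (p : ℕ) [Fact p.Prime]

lemma choose_mul_add_modEq {N₀ K₀ : ℕ} (N K : ℕ) (hN : N₀ < p) (hK : K₀ < p) :
    (p * N + N₀).choose (p * K + K₀) ≡ N₀.choose K₀ * N.choose K [ZMOD p] := by
  have hp := (Fact.out : p.Prime).pos
  simpa [Nat.mul_add_mod, Nat.mul_add_div hp, Nat.mod_eq_of_lt, Nat.div_eq_of_lt, hN, hK]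
    using Choose.choose_modEq_choose_mod_mul_choose_div (p := p) (n := p * N + N₀)
      (k := p * K + K₀)

lemma natCast_choose_sub_one {k : ℕ} (hk : k < p) :
    ((p - 1).choose k : ZMod p) = (-1) ^ k := by
  induction k with
  | zero => simp
  | succ k ih =>
    have hp := (Fact.out : p.Prime)
    have hpascal : p.choose (k + 1) = (p - 1).choose k + (p - 1).choose (k + 1) := by
      rw [← Nat.choose_succ_succ', Nat.sub_add_cancel hp.one_le]
    have hvanish : (p.choose (k + 1) : ZMod p) = 0 :=
      (ZMod.natCast_eq_zero_iff _ _).mpr (hp.dvd_choose_self k.succ_ne_zero hk)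
    rw [hpascal, Nat.cast_add, ih (by omega)] at hvanish
    linear_combination hvanish

lemma natCast_choose_sub_two {r : ℕ} (hr : r < p) :
    ((p - 2).choose r : ZMod p) = (-1) ^ r * (r + 1) := by
  induction r with
  | zero => simp
  | succ r ih =>
    have hp := (Fact.out : p.Prime).two_le
    have hpascal : (p - 1).choose (r + 1) = (p - 2).choose r + (p - 2).choose (r + 1) := by
      rw [← Nat.choose_succ_succ', show p - 2 + 1 = p - 1 by omega]
    have h := natCast_choose_sub_one p hr
    rw [hpascal, Nat.cast_add, ih (by omega)] at h
    push_cast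
    linear_combination h

lemma natCast_ellipticClosedForm (m q r : ℕ) :
    (ellipticClosedForm p m q r : ZMod p) = (-1) ^ q * (r + 1) * ((m + 1).choose q : ℕ) := by
  rcases q with _ | q
  · simp [ellipticClosedForm]
  · simp only [ellipticClosedForm, Nat.add_sub_cancel, Nat.choose_succ_succ']
    push_cast
    rw [ZMod.natCast_self]
    ring

lemma natCast_neg_one_pow_mul_choose (m q : ℕ) {r : ℕ} (hr : r < p) :
    (((-1 : ℤ) ^ (p * q + r) * (p * (m + 2) - 2).choose (p * q + r) : ℤ) : ZMod p) =
      (-1) ^ q * (r + 1) * ((m + 1).choose q : ℕ) := by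
  have hp := (Fact.out : p.Prime).two_le
  have hdigits : p * (m + 2) - 2 = p * (m + 1) + (p - 2) := by
    rw [mul_add, mul_add]
    omega
  have hlucas := (ZMod.intCast_eq_intCast_iff _ _ p).mpr
    (choose_mul_add_modEq p (m + 1) q (by omega : p - 2 < p) hr)
  have hsq : ((-1 : ZMod p) ^ r) ^ 2 = 1 := by
    rw [← pow_mul, mul_comm, pow_mul, neg_one_sq, one_pow]
  push_cast at hlucas ⊢
  rw [hdigits, hlucas, natCast_choose_sub_two p hr, pow_add, pow_mul, neg_one_pow_char]
  linear_combination (-1 : ZMod p) ^ q * (r + 1) * ((m + 1).choose q : ZMod p) * hsq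

end Lucas

theorem elliptic_congruence_closed_form_general (p n d q r : ℕ) (hp : p.Prime) (hn : 2 ≤ n)
    (hqr : d = p * q + r) (hr : r ≤ p - 1) :
    (∑ t ∈ ((Finset.range (n - 1)) ×ˢ (Finset.range p) ×ˢ (Finset.range p)).filter
        (fun t => p * t.1 + t.2.1 + t.2.2 = d),
      (-1 : ℤ) ^ t.1 * ((n - 2).choose t.1 : ℤ)) =
      ((r : ℤ) + 1) * (-1) ^ q * ((n - 2).choose q : ℤ) +
        (if 1 ≤ q then
          ((p : ℤ) - 1 - (r : ℤ)) * (-1) ^ (q - 1) * ((n - 2).choose (q - 1) : ℤ)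
        else 0) ∧
    Int.ModEq (p : ℤ)
      ((-1 : ℤ) ^ d * ((p * n - 2).choose d : ℤ))
      (((r : ℤ) + 1) * (-1) ^ q * ((n - 2).choose q : ℤ) +
        (if 1 ≤ q then
          ((p : ℤ) - 1 - (r : ℤ)) * (-1) ^ (q - 1) * ((n - 2).choose (q - 1) : ℤ)
        else 0)) := by
  have := Fact.mk hp
  have hrp : r < p := by have := hp.pos; omega
  obtain ⟨m, rfl⟩ := Nat.exists_eq_add_of_le' hn
  subst hqr
  rw [show m + 2 - 1 = m + 1 by omega, Nat.add_sub_cancel]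
  refine ⟨sum_filter_digit_triples_eq_ellipticClosedForm p m q r hrp, ?_⟩
  change Int.ModEq p _ (ellipticClosedForm p m q r)
  rw [← ZMod.intCast_eq_intCast_iff, natCast_neg_one_pow_mul_choose p m q hrp,
    natCast_ellipticClosedForm]

/-- **Closed form of the elliptic-surface congruence.** For `d = pq + r` with
`0 ≤ r ≤ p−1`, the sum `Σ (−1)^a C(n−2,a)` over triples `(a,b,c)` with
`0 ≤ a ≤ n−2`, `0 ≤ b,c ≤ p−1`, `pa+b+c = d`, equals
`(r+1)(−1)^q C(n−2,q) + (p−1−r)(−1)^{q−1} C(n−2,q−1)` (with the convention that the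
second term vanishes for `q = 0`, i.e. `C(n−2,k) = 0` for `k < 0`; `Nat.choose`
already vanishes for `k > n−2`); and by Lucas' theorem this closed form is congruent
mod `p` to `(−1)^d C(pn−2,d)`. -/
theorem elliptic_congruence_closed_form (p n d q r : ℕ) (hp : p.Prime) (hn : 2 ≤ n)
    (hd : d ≤ p * n - 2) (hqr : d = p * q + r) (hr : r ≤ p - 1) :
    (∑ t ∈ ((Finset.range (n - 1)) ×ˢ (Finset.range p) ×ˢ (Finset.range p)).filter
        (fun t => p * t.1 + t.2.1 + t.2.2 = d),
      (-1 : ℤ) ^ t.1 * ((n - 2).choose t.1 : ℤ)) =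
      ((r : ℤ) + 1) * (-1) ^ q * ((n - 2).choose q : ℤ) +
        (if 1 ≤ q then
          ((p : ℤ) - 1 - (r : ℤ)) * (-1) ^ (q - 1) * ((n - 2).choose (q - 1) : ℤ)
        else 0) ∧
    Int.ModEq (p : ℤ)
      ((-1 : ℤ) ^ d * ((p * n - 2).choose d : ℤ))
      (((r : ℤ) + 1) * (-1) ^ q * ((n - 2).choose q : ℤ) +
        (if 1 ≤ q then
          ((p : ℤ) - 1 - (r : ℤ)) * (-1) ^ (q - 1) * ((n - 2).choose (q - 1) : ℤ)
        else 0)) :=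
  elliptic_congruence_closed_form_general p n d q r hp hn hqr hr
end
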